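/- arXiv:1501.05226 — 2 statements merged into one kernel-verified Lean document; each statement's English description precedes it below -/
import Mathlib

section
/- Suppose f ∈ C^m(ℝⁿ) (m ≥ 2 finite) is convex on ℝⁿ and C ⊆ ℝⁿ is compact. Then f satisfies condition (CW^m) on C: for every ε > 0 there exists t_ε > 0 such that D²f(y)(v²) + t D³f(y)(w,v²) + … + (t^{m−2}/(m−2)!) D^m f(y)(w^{m−2},v²) ≥ −ε t^{m−2} for all y ∈ C, all unit v, w, and 0 < t ≤ t_ε. -/
/-! For `y ∈ C` and unit vectors `v`, `w`, the function `g s = D²f(y + s • w)(v, v)` is nonnegative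
by convexity, and the sum in `(CWᵐ)` is its Taylor polynomial of order `m - 2` at `0`, evaluated at
`t`. By Lagrange's form of the remainder this polynomial equals `g t ≥ 0` plus `t^(m-2)/(m-2)!`
times the difference of `Dᵐf` (applied to unit vectors) at `y` and at a point `y + ξ • w` with
`0 ≤ ξ ≤ t`; that difference is at least `-ε` once `t` is below a modulus of continuity of `Dᵐf`
that is uniform near the compact set `C`. -/

open Set Finset Nat

/-- The sum `∑_{k=2}^m (t^{k-2}/(k-2)!) Dᵏf(y)(w^{k-2}, v²)` appearing in condition `(CWᵐ)`. -/
noncomputable def cwSum {n : ℕ} (m : ℕ) (f : EuclideanSpace ℝ (Fin n) → ℝ)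
    (y v w : EuclideanSpace ℝ (Fin n)) (t : ℝ) : ℝ :=
  ∑ k ∈ Finset.Icc 2 m,
    (t ^ (k - 2) / (Nat.factorial (k - 2))) *
      iteratedFDeriv ℝ k f y (fun i => if (i : ℕ) < k - 2 then w else v)

/-- Condition `(CWᵐ)` of Azagra-Mudarra on a set `C`. -/
def CW {n : ℕ} (m : ℕ) (f : EuclideanSpace ℝ (Fin n) → ℝ)
    (C : Set (EuclideanSpace ℝ (Fin n))) : Prop :=
  ∀ ε > (0:ℝ), ∃ tε > (0:ℝ), ∀ y ∈ C, ∀ v w : EuclideanSpace ℝ (Fin n),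
    ‖v‖ = 1 → ‖w‖ = 1 → ∀ t : ℝ, 0 < t → t ≤ tε →
      -ε * t ^ (m - 2) ≤ cwSum m f y v w t

section Line

variable {E F : Type*} [NormedAddCommGroup E] [NormedSpace ℝ E]
  [NormedAddCommGroup F] [NormedSpace ℝ F] {N : WithTop ℕ∞} {f : E → F}

theorem hasDerivAt_iteratedFDeriv_comp_line {k : ℕ} (hf : ContDiff ℝ N f) (hk : k < N)
    (y w : E) (u : Fin k → E) (s : ℝ) :
    HasDerivAt (fun s : ℝ => iteratedFDeriv ℝ k f (y + s • w) u)
      (iteratedFDeriv ℝ (k + 1) f (y + s • w) (Fin.cons w u)) s := by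
  have hline : HasDerivAt (fun s : ℝ => y + s • w) w s := by
    simpa using ((hasDerivAt_id s).smul_const w).const_add y
  have hD := (hf.differentiable_iteratedFDeriv hk (y + s • w)).hasFDerivAt.comp_hasDerivAt s hline
  rw [iteratedFDeriv_succ_apply_left, Fin.cons_zero, Fin.tail_cons]
  exact (ContinuousMultilinearMap.apply ℝ (fun _ => E) F u).hasFDerivAt.comp_hasDerivAt s hD

theorem iteratedDeriv_iteratedFDeriv_two_comp_line {j : ℕ} (hf : ContDiff ℝ N f)
    (hj : j + 2 ≤ N) (y v w : E) :
    iteratedDeriv j (fun s : ℝ => iteratedFDeriv ℝ 2 f (y + s • w) (fun _ => v)) =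
      fun s => iteratedFDeriv ℝ (j + 2) f (y + s • w) (fun i => if (i : ℕ) < j then w else v) := by
  induction j with
  | zero => funext s; simp
  | succ j ih =>
    have hcons : (Fin.cons w fun i : Fin (j + 2) => if (i : ℕ) < j then w else v) =
        fun i : Fin (j + 1 + 2) => if (i : ℕ) < j + 1 then w else v := by
      funext i
      refine Fin.cases ?_ (fun i => ?_) i <;> simp
    rw [iteratedDeriv_succ, ih (le_trans (by norm_cast; omega) hj), ← hcons]
    funext s
    exact (hasDerivAt_iteratedFDeriv_comp_line hf
      (lt_of_lt_of_le (by norm_cast; omega) hj) y w _ s).deriv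

theorem contDiff_iteratedFDeriv_comp_line {k : ℕ} {M : ℕ} (hf : ContDiff ℝ N f)
    (hk : M + k ≤ N) (y w : E) (u : Fin k → E) :
    ContDiff ℝ M (fun s : ℝ => iteratedFDeriv ℝ k f (y + s • w) u) :=
  (ContinuousMultilinearMap.apply ℝ (fun _ => E) F u).contDiff.comp
    ((hf.iteratedFDeriv_right hk).comp (contDiff_const.add (contDiff_id.smul contDiff_const)))

theorem ConvexOn.iteratedFDeriv_two_nonneg {f : E → ℝ} (hconv : ConvexOn ℝ univ f)
    (hf : ContDiff ℝ 2 f) (x v : E) :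
    0 ≤ iteratedFDeriv ℝ 2 f x (fun _ => v) := by
  -- `ψ s = f (x + s • v)`, written so that `hasDerivAt_iteratedFDeriv_comp_line` applies
  set ψ : ℝ → ℝ := fun s => iteratedFDeriv ℝ 0 f (x + s • v) Fin.elim0
  have hψ_conv : ConvexOn ℝ univ ψ := by
    have h := hconv.comp_affineMap (AffineMap.lineMap x (x + v))
    have hline : f ∘ AffineMap.lineMap x (x + v) = ψ := by
      funext s
      simp [ψ, AffineMap.lineMap_apply_module', add_comm]
    rwa [hline, preimage_univ] at h
  have hψ' : deriv ψ = fun s => iteratedFDeriv ℝ 1 f (x + s • v) (Fin.cons v Fin.elim0) :=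
    funext fun s => (hasDerivAt_iteratedFDeriv_comp_line hf (by norm_num) x v _ s).deriv
  have hψ'' : deriv (deriv ψ) 0 = iteratedFDeriv ℝ 2 f x (fun _ => v) := by
    rw [hψ', (hasDerivAt_iteratedFDeriv_comp_line hf (by norm_num) x v _ 0).deriv]
    simp only [zero_smul, add_zero]
    congr 1
    funext i
    fin_cases i <;> rfl
  rw [← hψ'']
  refine Monotone.deriv_nonneg ?_
  rw [← monotoneOn_univ]
  exact hψ_conv.monotoneOn_deriv fun s _ =>
    (hasDerivAt_iteratedFDeriv_comp_line hf (by norm_num) x v _ s).differentiableAt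

end Line

theorem exists_taylor_sum_eq_add_mul_sub {g : ℝ → ℝ} {N : ℕ} (hg : ContDiff ℝ N g) {x₀ x : ℝ}
    (hx : x₀ < x) :
    ∃ ξ ∈ Icc x₀ x, ∑ j ∈ range (N + 1), (x - x₀) ^ j / j ! * iteratedDeriv j g x₀ =
      g x + (x - x₀) ^ N / N ! * (iteratedDeriv N g x₀ - iteratedDeriv N g ξ) := by
  cases N with
  | zero => exact ⟨x, right_mem_Icc.2 hx.le, by simp⟩
  | succ k =>
    obtain ⟨ξ, hξ, hrem⟩ := taylor_mean_remainder_lagrange_iteratedDeriv hx.ne hg.contDiffOn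
    rw [uIoo_of_le hx.le] at hξ
    refine ⟨ξ, Ioo_subset_Icc_self hξ, ?_⟩
    have htaylor : taylorWithinEval g k (uIcc x₀ x) x₀ x =
        ∑ j ∈ range (k + 1), (x - x₀) ^ j / j ! * iteratedDeriv j g x₀ := by
      rw [taylor_within_apply]
      refine Finset.sum_congr rfl fun j hj => ?_
      have hjk : j ≤ k + 1 := by have := Finset.mem_range.1 hj; omega
      rw [iteratedDerivWithin_eq_iteratedDeriv (uniqueDiffOn_uIcc hx.ne)
        (hg.contDiffAt.of_le (by exact_mod_cast hjk)) left_mem_uIcc, smul_eq_mul]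
      ring
    rw [Finset.sum_range_succ, ← htaylor]
    linear_combination -hrem

theorem neg_mul_pow_le_taylor_sum {g : ℝ → ℝ} {N : ℕ} (hg : ContDiff ℝ N g) {x₀ x ε : ℝ}
    (hx : x₀ < x) (hgx : 0 ≤ g x)
    (hε : ∀ ξ ∈ Icc x₀ x, |iteratedDeriv N g x₀ - iteratedDeriv N g ξ| ≤ ε) :
    -ε * (x - x₀) ^ N ≤ ∑ j ∈ range (N + 1), (x - x₀) ^ j / j ! * iteratedDeriv j g x₀ := by
  obtain ⟨ξ, hξ, hsum⟩ := exists_taylor_sum_eq_add_mul_sub hg hx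
  have hε0 : 0 ≤ ε := (abs_nonneg _).trans (hε ξ hξ)
  have hpow : 0 ≤ (x - x₀) ^ N := pow_nonneg (sub_nonneg.2 hx.le) N
  have hc0 : 0 ≤ (x - x₀) ^ N / N ! := div_nonneg hpow (by positivity)
  have hc : (x - x₀) ^ N / N ! ≤ (x - x₀) ^ N :=
    div_le_self hpow (by exact_mod_cast (factorial_pos N))
  rw [hsum]
  calc -ε * (x - x₀) ^ N ≤ -ε * ((x - x₀) ^ N / N !) :=
        mul_le_mul_of_nonpos_left hc (neg_nonpos.2 hε0)
    _ ≤ (x - x₀) ^ N / N ! * (iteratedDeriv N g x₀ - iteratedDeriv N g ξ) := by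
      rw [mul_comm]
      exact mul_le_mul_of_nonneg_left (neg_le_of_abs_le (hε ξ hξ)) hc0
    _ ≤ _ := le_add_of_nonneg_left hgx

theorem IsCompact.exists_pos_forall_dist_lt {α β : Type*} [PseudoMetricSpace α]
    [PseudoMetricSpace β] {s : Set α} (hs : IsCompact s) {F : α → β}
    (hF : ∀ x ∈ s, ContinuousAt F x) {ε : ℝ} (hε : 0 < ε) :
    ∃ δ > 0, ∀ x ∈ s, ∀ y, dist x y < δ → dist (F x) (F y) < ε := by
  obtain ⟨δ, hδ, hsub⟩ := Metric.mem_uniformity_dist.1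
    (hs.uniformContinuousAt_of_continuousAt F hF (Metric.dist_mem_uniformity hε))
  exact ⟨δ, hδ, fun x hx y hxy => hsub hxy hx⟩

theorem ContinuousMultilinearMap.norm_apply_le_of_norm_le_one {𝕜 ι G : Type*}
    [NontriviallyNormedField 𝕜] [Fintype ι] {E : ι → Type*} [∀ i, NormedAddCommGroup (E i)]
    [∀ i, NormedSpace 𝕜 (E i)] [NormedAddCommGroup G] [NormedSpace 𝕜 G]
    (A : ContinuousMultilinearMap 𝕜 E G) {p : ∀ i, E i} (hp : ∀ i, ‖p i‖ ≤ 1) : ‖A p‖ ≤ ‖A‖ := by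
  simpa using A.le_opNorm_mul_pow_card_of_le (pi_norm_le_iff_of_nonneg zero_le_one |>.2 hp)

theorem cwSum_eq_sum_iteratedDeriv {n N : ℕ} {f : EuclideanSpace ℝ (Fin n) → ℝ}
    (hf : ContDiff ℝ (N + 2 : ℕ) f) (y v w : EuclideanSpace ℝ (Fin n)) (t : ℝ) :
    cwSum (N + 2) f y v w t = ∑ j ∈ range (N + 1), t ^ j / j ! *
      iteratedDeriv j (fun s : ℝ => iteratedFDeriv ℝ 2 f (y + s • w) (fun _ => v)) 0 := by
  rw [cwSum, show Finset.Icc 2 (N + 2) = Finset.Ico (0 + 2) (N + 1 + 2) from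
    (Finset.Ico_add_one_right_eq_Icc 2 (N + 2)).symm, ← sum_Ico_add', ← range_eq_Ico]
  refine sum_congr rfl fun j hj => ?_
  rw [iteratedDeriv_iteratedFDeriv_two_comp_line hf
    (by norm_cast; have := Finset.mem_range.1 hj; omega) y v w]
  simp

/-- If `f ∈ Cᵐ(ℝⁿ)` (`m ≥ 2`) is convex on `ℝⁿ` and `C` is compact, then `f` satisfies
condition `(CWᵐ)` on `C`. -/
theorem stmt_4 {n : ℕ} (C : Set (EuclideanSpace ℝ (Fin n))) (hCc : IsCompact C)
    (m : ℕ) (hm : 2 ≤ m) (f : EuclideanSpace ℝ (Fin n) → ℝ)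
    (hf : ContDiff ℝ (m : ℕ∞) f) (hconv : ConvexOn ℝ Set.univ f) :
    CW m f C := by
  obtain ⟨N, rfl⟩ : ∃ N, m = N + 2 := ⟨m - 2, by omega⟩
  replace hf : ContDiff ℝ (N + 2 : ℕ) f := by exact_mod_cast hf
  intro ε hε
  obtain ⟨δ, hδ, hnear⟩ := hCc.exists_pos_forall_dist_lt
    (fun x _ => (hf.continuous_iteratedFDeriv le_rfl).continuousAt) hε
  refine ⟨δ / 2, half_pos hδ, fun y hy v w hv hw t ht htδ => ?_⟩
  set g : ℝ → ℝ := fun s => iteratedFDeriv ℝ 2 f (y + s • w) (fun _ => v)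
  have hg : ContDiff ℝ N g := contDiff_iteratedFDeriv_comp_line hf le_rfl y w _
  have hgt : 0 ≤ g t := hconv.iteratedFDeriv_two_nonneg (hf.of_le (by norm_cast)) _ v
  have hclose : ∀ ξ ∈ Icc 0 t, |iteratedDeriv N g 0 - iteratedDeriv N g ξ| ≤ ε := by
    intro ξ hξ
    have hdist : dist y (y + ξ • w) < δ := by
      rw [dist_self_add_right, norm_smul, hw, mul_one, Real.norm_of_nonneg hξ.1]
      linarith [hξ.2]
    have hnear' := hnear y hy _ hdist
    rw [dist_eq_norm] at hnear'
    simp only [g, iteratedDeriv_iteratedFDeriv_two_comp_line hf le_rfl, zero_smul, add_zero,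
      ← sub_apply, ← Real.norm_eq_abs]
    refine ((ContinuousMultilinearMap.norm_apply_le_of_norm_le_one _ fun i => ?_).trans
      hnear'.le)
    split_ifs <;> simp [hv, hw]
  simpa [cwSum_eq_sum_iteratedDeriv hf] using neg_mul_pow_le_taylor_sum hg ht hgt hclose
end

section
/- Let m ≥ 3, C ⊆ ℝⁿ compact, and suppose f ∈ C^m(ℝⁿ) together with its derivatives satisfies (CW^{m}) with a strict inequality on C: there exist η > 0, t₀ > 0 with D²f(y)(v²) + t D³f(y)(w,v²) + … + (t^{m−2}/(m−2)!) D^m f(y)(w^{m−2},v²) ≥ η t^{m−2} for all y ∈ C, unit v, w, 0 < t ≤ t₀. Then there exists t₀' > 0 such that D²f(x)(v,v) ≥ 0 whenever d(x,C) ≤ t₀', i.e. f is convex on the open neighbourhood {x : d(x,C) < t₀'} of C. -/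
/-!
Let `x` lie within `t` of `C`, let `y ∈ C` be a nearest point and write `x = y + t • w`
with `‖w‖ = 1`. The Taylor polynomial of order `m - 2` at `0` of
`s ↦ D²f(y + s • w)(v, v)`, evaluated at `t`, is exactly `cwSum m f y v w t ≥ η t^{m-2}`,
and its Lagrange remainder differs from the top term by at most `η t^{m-2} / (m-2)!`
once `t` is below the modulus of uniform continuity of `Dᵐf` at `C`.
Hence `D²f(x)(v, v) ≥ 0` for `t > 0`, and for `t = 0` by continuity.
-/

open Set Finset Nat

theorem taylor_mean_remainder_lagrange_iteratedDeriv_sub {f : ℝ → ℝ} {x₀ x : ℝ} {n : ℕ}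
    (hx : x₀ ≠ x) (hf : ContDiff ℝ (n + 1) f) :
    ∃ x' ∈ uIoo x₀ x,
      f x - ∑ k ∈ range (n + 2), (x - x₀) ^ k / k ! * iteratedDeriv k f x₀ =
        (iteratedDeriv (n + 1) f x' - iteratedDeriv (n + 1) f x₀) * (x - x₀) ^ (n + 1) /
          (n + 1)! := by
  obtain ⟨x', hx', hrem⟩ := taylor_mean_remainder_lagrange_iteratedDeriv hx hf.contDiffOn
  refine ⟨x', hx', ?_⟩
  have hsum : taylorWithinEval f n (uIcc x₀ x) x₀ x =
      ∑ k ∈ range (n + 1), (x - x₀) ^ k / k ! * iteratedDeriv k f x₀ := by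
    rw [taylor_within_apply]
    refine Finset.sum_congr rfl fun k hk => ?_
    have hk' : (k : WithTop ℕ∞) ≤ n + 1 := by
      norm_cast
      rw [Finset.mem_range] at hk
      omega
    rw [iteratedDerivWithin_eq_iteratedDeriv (uniqueDiffOn_uIcc hx) (hf.contDiffAt.of_le hk')
      left_mem_uIcc, smul_eq_mul]
    ring
  rw [Finset.sum_range_succ, ← hsum]
  linear_combination hrem

theorem IsCompact.exists_pos_forall_dist_le {α β : Type*} [PseudoMetricSpace α]
    [PseudoMetricSpace β] {K : Set α} (hK : IsCompact K) {g : α → β} (hg : Continuous g)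
    {ε : ℝ} (hε : 0 < ε) :
    ∃ δ > 0, ∀ y ∈ K, ∀ z, dist z y ≤ δ → dist (g z) (g y) ≤ ε := by
  obtain ⟨δ, hδ, hδK⟩ := Metric.mem_uniformity_dist.1
    (hK.uniformContinuousAt_of_continuousAt g (fun a _ => hg.continuousAt)
      (Metric.dist_mem_uniformity hε))
  refine ⟨δ / 2, half_pos hδ, fun y hy z hz => ?_⟩
  have hyz : dist y z < δ := by rw [_root_.dist_comm]; linarith
  rw [_root_.dist_comm]
  exact (hδK hyz hy).le

theorem exists_norm_eq_one_eq_add_smul {E : Type*} [NormedAddCommGroup E] [NormedSpace ℝ E]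
    {v : E} (hv : ‖v‖ = 1) (x y : E) : ∃ w : E, ‖w‖ = 1 ∧ x = y + dist x y • w := by
  rcases eq_or_ne x y with rfl | hxy
  · exact ⟨v, hv, by simp⟩
  · have hd : dist x y ≠ 0 := dist_ne_zero.2 hxy
    refine ⟨(dist x y)⁻¹ • (x - y), ?_, ?_⟩
    · rw [norm_smul, ← dist_eq_norm, norm_inv, Real.norm_of_nonneg dist_nonneg,
        inv_mul_cancel₀ hd]
    · rw [smul_smul, mul_inv_cancel₀ hd, one_smul, add_sub_cancel]

section Line

variable {E F : Type*} [NormedAddCommGroup E] [NormedSpace ℝ E] [NormedAddCommGroup F]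
  [NormedSpace ℝ F] {f : E → F} {N : WithTop ℕ∞}

theorem ContDiff.iteratedFDeriv_apply_add_smul {M : WithTop ℕ∞} {k : ℕ}
    (hf : ContDiff ℝ N f) (hM : M + k ≤ N) (y w : E) (u : Fin k → E) :
    ContDiff ℝ M (fun s : ℝ => iteratedFDeriv ℝ k f (y + s • w) u) :=
  (ContinuousMultilinearMap.apply ℝ (fun _ => E) F u).contDiff.comp
    ((hf.iteratedFDeriv_right hM).comp (contDiff_const.add (contDiff_id.smul contDiff_const)))

theorem deriv_iteratedFDeriv_apply_add_smul (hf : ContDiff ℝ N f) {k : ℕ}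
    (hk : (k : WithTop ℕ∞) < N) (y w : E) (u : Fin k → E) (s : ℝ) :
    deriv (fun s : ℝ => iteratedFDeriv ℝ k f (y + s • w) u) s =
      iteratedFDeriv ℝ (k + 1) f (y + s • w) (Fin.cons w u) := by
  have hd := hf.differentiable_iteratedFDeriv hk (y + s • w)
  rw [hd.iteratedFDeriv_succ_apply_left']
  exact (hd.continuousMultilinear_apply_const u).deriv_comp_add_smul

theorem iteratedDeriv_iteratedFDeriv_two_apply_add_smul (hf : ContDiff ℝ N f) {j : ℕ}
    (hj : ((j + 2 : ℕ) : WithTop ℕ∞) ≤ N) (y v w : E) :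
    iteratedDeriv j (fun s : ℝ => iteratedFDeriv ℝ 2 f (y + s • w) (fun _ => v)) =
      fun s => iteratedFDeriv ℝ (j + 2) f (y + s • w)
        (fun i => if (i : ℕ) < j then w else v) := by
  induction j with
  | zero => simp
  | succ j ih =>
    have hj' : ((j + 2 : ℕ) : WithTop ℕ∞) < N := lt_of_lt_of_le (by norm_cast; omega) hj
    rw [iteratedDeriv_succ, ih hj'.le]
    funext s
    rw [deriv_iteratedFDeriv_apply_add_smul hf hj']
    congr 1
    funext i
    refine Fin.cases ?_ (fun i => ?_) i <;> simp

end Line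

section CW

variable {n : ℕ} {f : EuclideanSpace ℝ (Fin n) → ℝ}

theorem cwSum_add_two (N : ℕ) (y v w : EuclideanSpace ℝ (Fin n)) (t : ℝ) :
    cwSum (N + 2) f y v w t = ∑ j ∈ range (N + 1),
      t ^ j / j ! * iteratedFDeriv ℝ (j + 2) f y (fun i => if (i : ℕ) < j then w else v) := by
  refine Finset.sum_bij' (fun k _ => k - 2) (fun j _ => j + 2) ?_ ?_ ?_ ?_ ?_ <;>
    intro k hk <;> simp only [Finset.mem_Icc, Finset.mem_range] at hk ⊢
  any_goals omega
  obtain ⟨j, rfl⟩ : ∃ j, k = j + 2 := ⟨k - 2, by omega⟩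
  -- `j + 2 - 2` occurs inside the type `Fin (j + 2 - 2 + 2)`, out of reach of `simp`
  rfl

theorem iteratedFDeriv_two_apply_add_smul_nonneg {N : ℕ} (hf : ContDiff ℝ (N + 3 : ℕ) f)
    {y v w : EuclideanSpace ℝ (Fin n)} (hv : ‖v‖ ≤ 1) (hw : ‖w‖ ≤ 1) {η s : ℝ}
    (hs : 0 < s)
    (hcw : η * s ^ (N + 1) ≤ cwSum (N + 3) f y v w s)
    (hosc : ∀ ξ ∈ Icc 0 s,
      ‖iteratedFDeriv ℝ (N + 3) f (y + ξ • w) - iteratedFDeriv ℝ (N + 3) f y‖ ≤ η) :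
    0 ≤ iteratedFDeriv ℝ 2 f (y + s • w) (fun _ => v) := by
  set g := fun s : ℝ => iteratedFDeriv ℝ 2 f (y + s • w) (fun _ => v)
  have hg : ContDiff ℝ (N + 1 : ℕ) g := hf.iteratedFDeriv_apply_add_smul (by norm_cast) y w _
  have hderiv (j : ℕ) (hj : j ≤ N + 1) := iteratedDeriv_iteratedFDeriv_two_apply_add_smul hf
    (j := j) (by norm_cast; omega) y v w
  obtain ⟨ξ, hξ, htaylor⟩ :=
    taylor_mean_remainder_lagrange_iteratedDeriv_sub hs.ne (by exact_mod_cast hg)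
  rw [uIoo_of_le hs.le] at hξ
  have hsum : ∑ k ∈ range (N + 2), (s - 0) ^ k / k ! * iteratedDeriv k g 0 =
      cwSum (N + 3) f y v w s := by
    rw [cwSum_add_two]
    refine Finset.sum_congr rfl fun k hk => ?_
    rw [hderiv k (by rw [Finset.mem_range] at hk; omega)]
    simp
  have hη : 0 ≤ η := (norm_nonneg _).trans (hosc 0 ⟨le_rfl, hs.le⟩)
  have hrem : |iteratedDeriv (N + 1) g ξ - iteratedDeriv (N + 1) g 0| ≤ η := by
    rw [hderiv (N + 1) le_rfl]
    beta_reduce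
    rw [zero_smul, add_zero, ← sub_apply, ← Real.norm_eq_abs]
    simpa using ContinuousMultilinearMap.le_mul_prod_of_opNorm_le_of_le
      (hosc ξ ⟨hξ.1.le, hξ.2.le⟩) (b := fun _ => 1) fun i => by split_ifs <;> assumption
  have hfac : s ^ (N + 1) / (N + 1)! ≤ s ^ (N + 1) :=
    div_le_self (by positivity) (by exact_mod_cast Nat.one_le_iff_ne_zero.2 (factorial_ne_zero _))
  rw [hsum, sub_zero, mul_div_assoc] at htaylor
  show 0 ≤ g s
  nlinarith [mul_le_mul_of_nonneg_right (neg_abs_le _ |>.trans' (neg_le_neg hrem))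
    (by positivity : 0 ≤ s ^ (N + 1) / (N + 1)!), mul_le_mul_of_nonneg_left hfac hη]

theorem iteratedFDeriv_two_apply_add_smul_nonneg_of_mem_Icc {N : ℕ}
    (hf : ContDiff ℝ (N + 3 : ℕ) f) {y v w : EuclideanSpace ℝ (Fin n)} (hv : ‖v‖ ≤ 1)
    (hw : ‖w‖ ≤ 1) {η r : ℝ} (hr : 0 < r)
    (hcw : ∀ t ∈ Ioc 0 r, η * t ^ (N + 1) ≤ cwSum (N + 3) f y v w t)
    (hosc : ∀ ξ ∈ Icc 0 r,
      ‖iteratedFDeriv ℝ (N + 3) f (y + ξ • w) - iteratedFDeriv ℝ (N + 3) f y‖ ≤ η) :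
    ∀ s ∈ Icc 0 r, 0 ≤ iteratedFDeriv ℝ 2 f (y + s • w) (fun _ => v) := by
  have hpos : Ioc 0 r ⊆ {s | 0 ≤ iteratedFDeriv ℝ 2 f (y + s • w) (fun _ => v)} :=
    fun s hs => iteratedFDeriv_two_apply_add_smul_nonneg hf hv hw hs.1 (hcw s hs)
      fun ξ hξ => hosc ξ ⟨hξ.1, hξ.2.trans hs.2⟩
  have hg : Continuous fun s : ℝ => iteratedFDeriv ℝ 2 f (y + s • w) (fun _ => v) :=
    (hf.iteratedFDeriv_apply_add_smul (M := 0) (by norm_cast; omega) y w _).continuous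
  rw [← closure_Ioc hr.ne]
  exact fun s hs => (isClosed_le continuous_const hg).closure_subset_iff.2 hpos hs

end CW

/-- If `m ≥ 3`, `C` is compact and `f ∈ Cᵐ(ℝⁿ)` satisfies `(CWᵐ)` with a strict inequality
on `C` (with constants `η, t₀ > 0`), then there is `t₀' > 0` such that `D²f(x)(v,v) ≥ 0`
whenever `d(x,C) ≤ t₀'`, i.e. `f` is convex on a neighbourhood of `C`. -/
theorem stmt_5 {n : ℕ} (C : Set (EuclideanSpace ℝ (Fin n))) (hCc : IsCompact C)
    (hCne : C.Nonempty) (m : ℕ) (hm : 3 ≤ m)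
    (f : EuclideanSpace ℝ (Fin n) → ℝ) (hf : ContDiff ℝ (m : ℕ∞) f)
    (η t₀ : ℝ) (hη : 0 < η) (ht₀ : 0 < t₀)
    (hstrict : ∀ y ∈ C, ∀ v w : EuclideanSpace ℝ (Fin n), ‖v‖ = 1 → ‖w‖ = 1 →
      ∀ t : ℝ, 0 < t → t ≤ t₀ → η * t ^ (m - 2) ≤ cwSum m f y v w t) :
    ∃ t₀' > (0:ℝ), ∀ x : EuclideanSpace ℝ (Fin n), Metric.infDist x C ≤ t₀' →
      ∀ v : EuclideanSpace ℝ (Fin n), ‖v‖ = 1 →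
      0 ≤ iteratedFDeriv ℝ 2 f x (fun _ => v) := by
  obtain ⟨N, rfl⟩ : ∃ N, m = N + 3 := ⟨m - 3, by omega⟩
  replace hf : ContDiff ℝ (N + 3 : ℕ) f := by exact_mod_cast hf
  obtain ⟨δ, hδ, hosc⟩ :=
    hCc.exists_pos_forall_dist_le (hf.continuous_iteratedFDeriv le_rfl) hη
  have hr : 0 < min t₀ δ := lt_min ht₀ hδ
  refine ⟨min t₀ δ, hr, fun x hx v hv => ?_⟩
  obtain ⟨y, hyC, hxy⟩ := hCc.exists_infDist_eq_dist hCne x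
  obtain ⟨w, hw, hxw⟩ := exists_norm_eq_one_eq_add_smul hv x y
  rw [hxw]
  refine iteratedFDeriv_two_apply_add_smul_nonneg_of_mem_Icc hf hv.le hw.le hr
    (fun t ht => hstrict y hyC v w hv hw t ht.1 (ht.2.trans (min_le_left _ _)))
    (fun s hs => ?_) _ ⟨dist_nonneg, hxy ▸ hx⟩
  rw [← dist_eq_norm]
  refine hosc y hyC _ ?_
  rw [dist_self_add_left, norm_smul, hw, mul_one, Real.norm_of_nonneg hs.1]
  exact hs.2.trans (min_le_right _ _)
end
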